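/- arXiv:1811.00234 — 6 statements merged into one kernel-verified Lean document; each statement's English description precedes it below -/
import Mathlib

section
/- Proposition 1, case t_q ≥ t_0 (fleet-size bound, no charger costs): let the total cost of a routing plan f be obj f = ζev · N f + Σ_{q ∈ Q} C q · f q. If q ≠ 0, 0 ≤ λ ≤ f 0, and t q ≥ t 0, then the cost reduction achieved by detouring λ vehicles from the min-operation path 0 to path q satisfies obj f − obj f' ≤ λ · (C 0 − C q); in particular, since C 0 ≤ C q, the detour cannot reduce the total cost, i.e., obj f' ≥ obj f. -/
/-!
Moving `lam` vehicles from path `0` to path `q` changes the operation cost by exactly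
`lam * (C q - C 0)`. Since `t 0 ≤ t q`, every instant at which a vehicle on path `0` is busy
is also one at which a vehicle on path `q` is busy, so the busy-vehicle count can only grow
pointwise, and with it the fleet size `N`. Hence the fleet cost does not drop, and the total
cost drops by at most `lam * (C 0 - C q) ≤ 0`.
-/

open Matrix Set

section Detour

variable {Q R : Type*} [DecidableEq Q]

theorem eq_add_single_sub_single [AddCommGroup R] {zero q : Q} (hq : q ≠ zero)
    {f f' : Q → R} {lam : R} (h0 : f' zero = f zero - lam) (hq' : f' q = f q + lam)
    (hp : ∀ p, p ≠ zero → p ≠ q → f' p = f p) :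
    f' = f + Pi.single q lam - Pi.single zero lam := by
  funext p
  by_cases hp0 : p = zero
  · subst hp0; simp [h0, hq]
  by_cases hpq : p = q
  · subst hpq; simp [hq', hp0]
  · simp [hp p hp0 hpq, hp0, hpq]

theorem sum_add_single_sub_single_mul [Fintype Q] [CommRing R] (f w : Q → R) (zero q : Q)
    (lam : R) :
    ∑ p, (f + Pi.single q lam - Pi.single zero lam : Q → R) p * w p =
      ∑ p, f p * w p + lam * (w q - w zero) := by
  change (f + Pi.single q lam - Pi.single zero lam) ⬝ᵥ w = f ⬝ᵥ w + _
  rw [sub_dotProduct, add_dotProduct, single_dotProduct, single_dotProduct]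
  ring

end Detour

theorem ite_mem_Icc_le_of_le {a s s' τ : ℝ} (h : s ≤ s') :
    (if τ ∈ Icc a s then (1 : ℝ) else 0) ≤ if τ ∈ Icc a s' then 1 else 0 := by
  by_cases hτ : τ ∈ Icc a s
  · simp [hτ, Icc_subset_Icc_right h hτ]
  · simp only [hτ, if_false]
    split_ifs <;> norm_num

theorem prop1_case_slower_general
    {Q : Type*} [Fintype Q] (zero : Q)
    (t C : Q → ℝ) (hCmin : ∀ p, C zero ≤ C p)
    (a : ℝ) (b : ℝ → ℝ) (T : Finset ℝ) (hT : T.Nonempty)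
    (ζev : ℝ) (hζ : 0 ≤ ζev)
    (f : Q → ℝ)
    (q : Q) (hq : q ≠ zero) (lam : ℝ) (hlam0 : 0 ≤ lam)
    (f' : Q → ℝ) (hf'0 : f' zero = f zero - lam) (hf'q : f' q = f q + lam)
    (hf'p : ∀ p, p ≠ zero → p ≠ q → f' p = f p)
    (drive : (Q → ℝ) → ℝ → ℝ)
    (hdrive : ∀ g τ, drive g τ =
      b τ + ∑ p, g p * (if τ ∈ Set.Icc a (a + t p) then (1 : ℝ) else 0))
    (N : (Q → ℝ) → ℝ) (hN : ∀ g, N g = T.sup' hT (fun τ => drive g τ))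
    (obj : (Q → ℝ) → ℝ) (hobj : ∀ g, obj g = ζev * N g + ∑ p, C p * g p)
    (htq : t zero ≤ t q) :
    obj f - obj f' ≤ lam * (C zero - C q) ∧ obj f ≤ obj f' := by
  classical
  have hf' := eq_add_single_sub_single hq hf'0 hf'q hf'p
  have hcost : ∑ p, C p * f' p = ∑ p, C p * f p + lam * (C q - C zero) := by
    simp only [mul_comm (C _)]
    rw [hf', sum_add_single_sub_single_mul]
  have hdrive_le (τ : ℝ) : drive f τ ≤ drive f' τ := by
    rw [hdrive, hdrive, hf', sum_add_single_sub_single_mul]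
    have hbusy := ite_mem_Icc_le_of_le (a := a) (τ := τ) (add_le_add_right htq a)
    have := mul_nonneg hlam0 (sub_nonneg.2 hbusy)
    linarith
  have hfleet : N f ≤ N f' := by
    rw [hN, hN]
    exact Finset.sup'_mono_fun fun τ _ => hdrive_le τ
  have hζN := mul_le_mul_of_nonneg_left hfleet hζ
  have hdetour := mul_le_mul_of_nonneg_left (sub_nonneg.2 (hCmin q)) hlam0
  rw [hobj, hobj, hcost]
  constructor <;> linarith

/-- Proposition 1, case `t q ≥ t 0` (fleet-size bound, no charger costs):
detouring `lam` vehicles from the min-operation path `zero` to a slower path `q`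
reduces the total cost `obj f = ζev * N f + Σ C q * f q` by at most `lam * (C 0 - C q)`;
in particular, since `C 0 ≤ C q`, the detour cannot reduce the total cost. -/
theorem prop1_case_slower
    {Q : Type*} [Fintype Q] [Nonempty Q] (zero : Q)
    (t C : Q → ℝ) (ht : ∀ p, 0 ≤ t p) (hC : ∀ p, 0 ≤ C p) (hCmin : ∀ p, C zero ≤ C p)
    (a : ℝ) (b : ℝ → ℝ) (T : Finset ℝ) (hT : T.Nonempty)
    (ζev : ℝ) (hζ : 0 ≤ ζev)
    (f : Q → ℝ) (hf : ∀ p, 0 ≤ f p)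
    (q : Q) (hq : q ≠ zero) (lam : ℝ) (hlam0 : 0 ≤ lam) (hlam : lam ≤ f zero)
    (f' : Q → ℝ) (hf'0 : f' zero = f zero - lam) (hf'q : f' q = f q + lam)
    (hf'p : ∀ p, p ≠ zero → p ≠ q → f' p = f p)
    (drive : (Q → ℝ) → ℝ → ℝ)
    (hdrive : ∀ g τ, drive g τ =
      b τ + ∑ p, g p * (if τ ∈ Set.Icc a (a + t p) then (1 : ℝ) else 0))
    (N : (Q → ℝ) → ℝ) (hN : ∀ g, N g = T.sup' hT (fun τ => drive g τ))
    (obj : (Q → ℝ) → ℝ) (hobj : ∀ g, obj g = ζev * N g + ∑ p, C p * g p)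
    (htq : t zero ≤ t q) :
    obj f - obj f' ≤ lam * (C zero - C q) ∧ obj f ≤ obj f' :=
  prop1_case_slower_general zero t C hCmin a b T hT ζev hζ f q hq lam hlam0 f' hf'0 hf'q hf'p drive
    hdrive N hN obj hobj htq
end

section
/- Proposition 1, case t_q < t_0 (fleet-size bound, no charger costs): let the total cost of a routing plan f be obj f = ζev · N f + Σ_{q ∈ Q} C q · f q. If q ≠ 0, 0 ≤ λ ≤ f 0, and t q < t 0, then the cost reduction achieved by detouring λ vehicles from the min-operation path 0 to path q satisfies obj f − obj f' ≤ λ · (C 0 − C q) + ζev · λ (the saved fleet investment is at most ζev · λ). -/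
/-! The detour moves `lam` vehicles from path `0` to path `q`, so `f - f'` is
`lam • (e₀ - e_q)`. Hence the operation cost drops by exactly `lam * (C 0 - C q)`, and at
every instant the busy count drops by `lam` times the difference of two `0/1` indicators,
i.e. by at most `lam`; taking maxima over `T`, the fleet size drops by at most `lam`. -/

section Detour

variable {Q : Type*} [DecidableEq Q] {zero q : Q} {lam : ℝ} {f f' : Q → ℝ}

theorem sub_eq_single_sub_single_of_detour (hq : q ≠ zero)
    (hf'0 : f' zero = f zero - lam) (hf'q : f' q = f q + lam)
    (hf'p : ∀ p, p ≠ zero → p ≠ q → f' p = f p) :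
    f - f' = Pi.single zero lam - Pi.single q lam := by
  ext p
  by_cases h0 : p = zero
  · subst h0; simp [hf'0, hq.symm]
  by_cases hpq : p = q
  · subst hpq; simp [hf'q, h0]
  simp [hf'p p h0 hpq, h0, hpq]

theorem sum_mul_sub_sum_mul_of_detour [Fintype Q]
    (hdet : f - f' = Pi.single zero lam - Pi.single q lam) (w : Q → ℝ) :
    ∑ p, w p * f p - ∑ p, w p * f' p = lam * (w zero - w q) := by
  change w ⬝ᵥ f - w ⬝ᵥ f' = _
  rw [← dotProduct_sub, hdet, dotProduct_sub, dotProduct_single, dotProduct_single]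
  ring

theorem sum_mul_sub_sum_mul_le_of_detour [Fintype Q]
    (hdet : f - f' = Pi.single zero lam - Pi.single q lam)
    (hlam : 0 ≤ lam) {w : Q → ℝ} (hw0 : w zero ≤ 1) (hwq : 0 ≤ w q) :
    ∑ p, w p * f p - ∑ p, w p * f' p ≤ lam := by
  rw [sum_mul_sub_sum_mul_of_detour hdet]
  nlinarith

end Detour

theorem prop1_case_faster_general
    {Q : Type*} [Fintype Q] (zero : Q)
    (t C : Q → ℝ)
    (a : ℝ) (b : ℝ → ℝ) (T : Finset ℝ) (hT : T.Nonempty)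
    (ζev : ℝ) (hζ : 0 ≤ ζev)
    (f : Q → ℝ)
    (q : Q) (hq : q ≠ zero) (lam : ℝ) (hlam0 : 0 ≤ lam)
    (f' : Q → ℝ) (hf'0 : f' zero = f zero - lam) (hf'q : f' q = f q + lam)
    (hf'p : ∀ p, p ≠ zero → p ≠ q → f' p = f p)
    (drive : (Q → ℝ) → ℝ → ℝ)
    (hdrive : ∀ g τ, drive g τ =
      b τ + ∑ p, g p * (if τ ∈ Set.Icc a (a + t p) then (1 : ℝ) else 0))
    (N : (Q → ℝ) → ℝ) (hN : ∀ g, N g = T.sup' hT (fun τ => drive g τ))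
    (obj : (Q → ℝ) → ℝ) (hobj : ∀ g, obj g = ζev * N g + ∑ p, C p * g p) :
    obj f - obj f' ≤ lam * (C zero - C q) + ζev * lam := by
  classical
  have hdet := sub_eq_single_sub_single_of_detour hq hf'0 hf'q hf'p
  have hbusy : ∀ τ, drive f τ ≤ drive f' τ + lam := fun τ => by
    set busy : Q → ℝ := fun p => if τ ∈ Set.Icc a (a + t p) then 1 else 0
    have h := sum_mul_sub_sum_mul_le_of_detour hdet hlam0 (w := busy)
      (by simp only [busy]; split_ifs <;> norm_num) (by simp only [busy]; split_ifs <;> norm_num)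
    simp only [hdrive, mul_comm (f _), mul_comm (f' _)]
    linarith
  have hfleet : N f ≤ N f' + lam := by
    rw [hN, hN, Finset.sup'_add]
    exact Finset.sup'_mono_fun fun τ _ => hbusy τ
  have hcost := sum_mul_sub_sum_mul_of_detour hdet C
  rw [hobj, hobj]
  linarith [mul_le_mul_of_nonneg_left hfleet hζ]

/-- Proposition 1, case `t q < t 0` (fleet-size bound, no charger costs):
detouring `lam` vehicles from the min-operation path `zero` to a faster path `q`
reduces the total cost by at most `lam * (C 0 - C q) + ζev * lam`. -/
theorem prop1_case_faster
    {Q : Type*} [Fintype Q] [Nonempty Q] (zero : Q)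
    (t C : Q → ℝ) (ht : ∀ p, 0 ≤ t p) (hC : ∀ p, 0 ≤ C p) (hCmin : ∀ p, C zero ≤ C p)
    (a : ℝ) (b : ℝ → ℝ) (T : Finset ℝ) (hT : T.Nonempty)
    (ζev : ℝ) (hζ : 0 ≤ ζev)
    (f : Q → ℝ) (hf : ∀ p, 0 ≤ f p)
    (q : Q) (hq : q ≠ zero) (lam : ℝ) (hlam0 : 0 ≤ lam) (hlam : lam ≤ f zero)
    (f' : Q → ℝ) (hf'0 : f' zero = f zero - lam) (hf'q : f' q = f q + lam)
    (hf'p : ∀ p, p ≠ zero → p ≠ q → f' p = f p)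
    (drive : (Q → ℝ) → ℝ → ℝ)
    (hdrive : ∀ g τ, drive g τ =
      b τ + ∑ p, g p * (if τ ∈ Set.Icc a (a + t p) then (1 : ℝ) else 0))
    (N : (Q → ℝ) → ℝ) (hN : ∀ g, N g = T.sup' hT (fun τ => drive g τ))
    (obj : (Q → ℝ) → ℝ) (hobj : ∀ g, obj g = ζev * N g + ∑ p, C p * g p)
    (htq : t q < t zero) :
    obj f - obj f' ≤ lam * (C zero - C q) + ζev * lam :=
  prop1_case_faster_general zero t C a b T hT ζev hζ f q hq lam hlam0 f' hf'0 hf'q hf'p drive hdrive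
    N hN obj hobj
end

section
/- Proposition 2 (charging-system bound, no fleet costs): let the total cost of a routing plan f be obj f = K f + Σ_{q ∈ Q} C q · f q. If q ≠ 0 and 0 ≤ λ ≤ f 0, then the cost reduction achieved by detouring λ vehicles from the min-operation path 0 to path q satisfies obj f − obj f' ≤ λ · (C 0 − C q) + κ · λ · Σ_{e ∈ Aq 0 \ Aq q} w e; that is, only the charger capacity associated with arcs of path 0 that the detoured vehicles no longer visit can be saved. -/
/-!
Exchanging the order of summation shows that the total cost is linear in the plan, with
coefficient `C p + κ * ∑ e ∈ Aq p, w e` on path `p`. Detouring `lam` vehicles from `zero` to `q`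
therefore changes the cost by exactly `lam` times the difference of the two coefficients, and the
difference of the two charging times is at most the weight of the arcs in `Aq zero \ Aq q`.
-/

open Finset

theorem Finset.sum_sub_sum_le_sum_sdiff {ι R : Type*} [DecidableEq ι]
    [AddCommGroup R] [PartialOrder R] [IsOrderedAddMonoid R]
    (s t : Finset ι) {w : ι → R} (hw : ∀ e, 0 ≤ w e) :
    ∑ e ∈ s, w e - ∑ e ∈ t, w e ≤ ∑ e ∈ s \ t, w e := by
  rw [← sum_sdiff_sub_sum_sdiff]
  exact sub_le_self _ (sum_nonneg fun e _ => hw e)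

theorem sum_mul_sum_ite_mem_eq_sum_sum_mul {ι A R : Type*} [Fintype ι] [Fintype A]
    [DecidableEq A] [CommSemiring R] (w : A → R) (paths : ι → Finset A) (g : ι → R) :
    ∑ e, w e * (∑ p, if e ∈ paths p then g p else 0) = ∑ p, (∑ e ∈ paths p, w e) * g p := by
  simp_rw [mul_sum, sum_mul, mul_ite, mul_zero]
  rw [sum_comm]
  simp_rw [sum_ite_mem, univ_inter]

theorem sum_mul_sub_sum_mul_of_shift {ι R : Type*} [Fintype ι] [CommRing R]
    {i j : ι} (hji : j ≠ i) {lam : R} (a f f' : ι → R)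
    (hi : f' i = f i - lam) (hj : f' j = f j + lam) (hother : ∀ p, p ≠ i → p ≠ j → f' p = f p) :
    ∑ p, a p * f p - ∑ p, a p * f' p = lam * (a i - a j) := by
  rw [← sum_sub_distrib, Fintype.sum_eq_add i j hji.symm fun p hp => by
    rw [hother p hp.1 hp.2, sub_self], hi, hj]
  ring

theorem prop2_charging_bound_general
    {Q : Type*} [Fintype Q] (zero : Q)
    (C : Q → ℝ)
    (f : Q → ℝ)
    (q : Q) (hq : q ≠ zero) (lam : ℝ) (hlam0 : 0 ≤ lam)
    (f' : Q → ℝ) (hf'0 : f' zero = f zero - lam) (hf'q : f' q = f q + lam)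
    (hf'p : ∀ p, p ≠ zero → p ≠ q → f' p = f p)
    {A : Type*} [Fintype A] [DecidableEq A]
    (w : A → ℝ) (hw : ∀ e, 0 ≤ w e) (Aq : Q → Finset A)
    (κ : ℝ) (hκ : 0 ≤ κ)
    (K : (Q → ℝ) → ℝ)
    (hK : ∀ g, K g = κ * ∑ e, w e * (∑ p, if e ∈ Aq p then g p else 0))
    (obj : (Q → ℝ) → ℝ) (hobj : ∀ g, obj g = K g + ∑ p, C p * g p) :
    obj f - obj f' ≤ lam * (C zero - C q) + κ * lam * ∑ e ∈ Aq zero \ Aq q, w e := by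
  have hobj_linear : ∀ g, obj g = ∑ p, (κ * ∑ e ∈ Aq p, w e + C p) * g p := fun g => by
    rw [hobj, hK, sum_mul_sum_ite_mem_eq_sum_sum_mul, mul_sum, ← sum_add_distrib]
    simp_rw [add_mul, mul_assoc]
  rw [hobj_linear, hobj_linear, sum_mul_sub_sum_mul_of_shift hq _ f f' hf'0 hf'q hf'p]
  calc lam * ((κ * ∑ e ∈ Aq zero, w e + C zero) - (κ * ∑ e ∈ Aq q, w e + C q))
      = lam * (C zero - C q) + κ * lam * (∑ e ∈ Aq zero, w e - ∑ e ∈ Aq q, w e) := by ring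
    _ ≤ lam * (C zero - C q) + κ * lam * ∑ e ∈ Aq zero \ Aq q, w e := by
      gcongr
      exact sum_sub_sum_le_sum_sdiff _ _ hw

/-- Proposition 2 (charging-system bound, no fleet costs):
detouring `lam` vehicles from the min-operation path `zero` to path `q`
reduces the total cost `obj f = K f + Σ C p * f p` by at most
`lam * (C 0 - C q) + κ * lam * Σ_{e ∈ Aq 0 \ Aq q} w e`. -/
theorem prop2_charging_bound
    {Q : Type*} [Fintype Q] [Nonempty Q] (zero : Q)
    (t C : Q → ℝ) (ht : ∀ p, 0 ≤ t p) (hC : ∀ p, 0 ≤ C p) (hCmin : ∀ p, C zero ≤ C p)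
    (f : Q → ℝ) (hf : ∀ p, 0 ≤ f p)
    (q : Q) (hq : q ≠ zero) (lam : ℝ) (hlam0 : 0 ≤ lam) (hlam : lam ≤ f zero)
    (f' : Q → ℝ) (hf'0 : f' zero = f zero - lam) (hf'q : f' q = f q + lam)
    (hf'p : ∀ p, p ≠ zero → p ≠ q → f' p = f p)
    {A : Type*} [Fintype A] [DecidableEq A]
    (w : A → ℝ) (hw : ∀ e, 0 ≤ w e) (Aq : Q → Finset A)
    (κ : ℝ) (hκ : 0 ≤ κ)
    (K : (Q → ℝ) → ℝ)
    (hK : ∀ g, K g = κ * ∑ e, w e * (∑ p, if e ∈ Aq p then g p else 0))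
    (obj : (Q → ℝ) → ℝ) (hobj : ∀ g, obj g = K g + ∑ p, C p * g p) :
    obj f - obj f' ≤ lam * (C zero - C q) + κ * lam * ∑ e ∈ Aq zero \ Aq q, w e :=
  prop2_charging_bound_general zero C f q hq lam hlam0 f' hf'0 hf'q hf'p w hw Aq κ hκ K hK obj hobj
end

section
/- Proposition 3, case t_q ≥ t_0 (joint fleet and charging-system bound): let the total cost of a routing plan f be obj f = ζev · N f + K f + Σ_{q ∈ Q} C q · f q. If q ≠ 0, 0 ≤ λ ≤ f 0, and t q ≥ t 0, then the cost reduction achieved by detouring λ vehicles from the min-operation path 0 to path q satisfies obj f − obj f' ≤ λ · (C 0 − C q) + d, where d = κ · λ · Σ_{e ∈ Aq 0 \ Aq q} w e. -/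
/-! Moving `lam` vehicles from path `0` to path `q` changes every linear functional
`g ↦ ∑ p, g p * X p` by exactly `lam * (X q - X 0)`. The operation cost is such a
functional, which gives the term `lam * (C 0 - C q)`. The busy-vehicle count at every
instant is one with `X p` the indicator of `[a, a + t p]`; since `t 0 ≤ t q` these
indicators increase from `0` to `q`, so no count and hence no fleet size decreases.
The charging load of an arc is one with `X p` the indicator of `e ∈ Aq p`; it can
drop only on arcs of `Aq 0 \ Aq q`, and there by exactly `lam`. -/

open Finset

theorem ite_mem_le_ite_mem {α : Type*} {s s' : Set α} (h : s ⊆ s') (x : α)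
    [Decidable (x ∈ s)] [Decidable (x ∈ s')] :
    (if x ∈ s then (1 : ℝ) else 0) ≤ if x ∈ s' then 1 else 0 := by
  by_cases hs : x ∈ s
  · simp [hs, h hs]
  · simp only [hs, if_false]
    split_ifs <;> norm_num

structure IsDetour {Q : Type*} (o q : Q) (lam : ℝ) (f f' : Q → ℝ) : Prop where
  ne : q ≠ o
  apply_origin : f' o = f o - lam
  apply_target : f' q = f q + lam
  apply_of_ne : ∀ p, p ≠ o → p ≠ q → f' p = f p

namespace IsDetour

variable {Q : Type*} {o q : Q} {lam : ℝ} {f f' : Q → ℝ}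

theorem eq_add_single [DecidableEq Q] (h : IsDetour o q lam f f') :
    f' = f + Pi.single q lam - Pi.single o lam := by
  funext p
  by_cases hpo : p = o
  · subst hpo; simp [h.apply_origin, h.ne]
  by_cases hpq : p = q
  · subst hpq; simp [h.apply_target, hpo]
  · simp [h.apply_of_ne p hpo hpq, hpo, hpq]

variable [Fintype Q]

theorem sum_mul (h : IsDetour o q lam f f') (X : Q → ℝ) :
    ∑ p, f' p * X p = ∑ p, f p * X p + lam * (X q - X o) := by
  classical
  simp only [h.eq_add_single, Pi.sub_apply, Pi.add_apply, sub_mul, add_mul, sum_sub_distrib,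
    sum_add_distrib, Pi.single_apply, ite_mul, zero_mul, sum_ite_eq', mem_univ, if_true]
  ring

theorem sum_mul_le (h : IsDetour o q lam f f') (hlam : 0 ≤ lam) {X : Q → ℝ}
    (hX : X o ≤ X q) : ∑ p, f p * X p ≤ ∑ p, f' p * X p := by
  rw [h.sum_mul]
  nlinarith

theorem busy_count_le (h : IsDetour o q lam f f') (hlam : 0 ≤ lam) {a : ℝ} {t : Q → ℝ}
    (ht : t o ≤ t q) (τ : ℝ) :
    ∑ p, f p * (if τ ∈ Set.Icc a (a + t p) then (1 : ℝ) else 0) ≤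
      ∑ p, f' p * (if τ ∈ Set.Icc a (a + t p) then (1 : ℝ) else 0) :=
  h.sum_mul_le hlam <| ite_mem_le_ite_mem (Set.Icc_subset_Icc_right (by linarith)) τ

theorem arc_load_sub_le {A : Type*} [DecidableEq A] (h : IsDetour o q lam f f')
    (hlam : 0 ≤ lam) (Aq : Q → Finset A) (e : A) :
    (∑ p, if e ∈ Aq p then f p else 0) - (∑ p, if e ∈ Aq p then f' p else 0) ≤
      if e ∈ Aq o \ Aq q then lam else 0 := by
  have hload : ∀ g : Q → ℝ,
      (∑ p, if e ∈ Aq p then g p else 0) = ∑ p, g p * if e ∈ Aq p then 1 else 0 := by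
    intro g
    simp only [mul_ite, mul_one, mul_zero]
  rw [hload, hload, h.sum_mul]
  by_cases ho : e ∈ Aq o <;> by_cases hq : e ∈ Aq q <;> simp [ho, hq, hlam]

theorem charging_cost_sub_le {A : Type*} [Fintype A] [DecidableEq A]
    (h : IsDetour o q lam f f') (hlam : 0 ≤ lam) {w : A → ℝ} (hw : ∀ e, 0 ≤ w e)
    (Aq : Q → Finset A) {κ : ℝ} (hκ : 0 ≤ κ) :
    κ * ∑ e, w e * (∑ p, if e ∈ Aq p then f p else 0) -
        κ * ∑ e, w e * (∑ p, if e ∈ Aq p then f' p else 0) ≤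
      κ * lam * ∑ e ∈ Aq o \ Aq q, w e := by
  calc κ * ∑ e, w e * (∑ p, if e ∈ Aq p then f p else 0) -
        κ * ∑ e, w e * (∑ p, if e ∈ Aq p then f' p else 0)
      = κ * ∑ e, w e * ((∑ p, if e ∈ Aq p then f p else 0) -
          (∑ p, if e ∈ Aq p then f' p else 0)) := by
        simp only [mul_sub, sum_sub_distrib]
    _ ≤ κ * ∑ e, w e * if e ∈ Aq o \ Aq q then lam else 0 := by
        gcongr with e
        · exact hw e
        · exact h.arc_load_sub_le hlam Aq e
    _ = κ * lam * ∑ e ∈ Aq o \ Aq q, w e := by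
        simp only [mul_ite, mul_zero, sum_ite_mem, univ_inter, mul_sum]
        exact sum_congr rfl fun e _ => by ring

end IsDetour

theorem prop3_case_slower_general
    {Q : Type*} [Fintype Q] (zero : Q)
    (t C : Q → ℝ)
    (a : ℝ) (b : ℝ → ℝ) (T : Finset ℝ) (hT : T.Nonempty)
    (ζev : ℝ) (hζ : 0 ≤ ζev)
    (f : Q → ℝ)
    (q : Q) (hq : q ≠ zero) (lam : ℝ) (hlam0 : 0 ≤ lam)
    (f' : Q → ℝ) (hf'0 : f' zero = f zero - lam) (hf'q : f' q = f q + lam)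
    (hf'p : ∀ p, p ≠ zero → p ≠ q → f' p = f p)
    (drive : (Q → ℝ) → ℝ → ℝ)
    (hdrive : ∀ g τ, drive g τ =
      b τ + ∑ p, g p * (if τ ∈ Set.Icc a (a + t p) then (1 : ℝ) else 0))
    (N : (Q → ℝ) → ℝ) (hN : ∀ g, N g = T.sup' hT (fun τ => drive g τ))
    {A : Type*} [Fintype A] [DecidableEq A]
    (w : A → ℝ) (hw : ∀ e, 0 ≤ w e) (Aq : Q → Finset A)
    (κ : ℝ) (hκ : 0 ≤ κ)
    (K : (Q → ℝ) → ℝ)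
    (hK : ∀ g, K g = κ * ∑ e, w e * (∑ p, if e ∈ Aq p then g p else 0))
    (obj : (Q → ℝ) → ℝ) (hobj : ∀ g, obj g = ζev * N g + K g + ∑ p, C p * g p)
    (htq : t zero ≤ t q)
    (d : ℝ) (hd : d = κ * lam * ∑ e ∈ Aq zero \ Aq q, w e) :
    obj f - obj f' ≤ lam * (C zero - C q) + d := by
  have hdetour : IsDetour zero q lam f f' := ⟨hq, hf'0, hf'q, hf'p⟩
  have hfleet : N f ≤ N f' := by
    simp only [hN, hdrive]
    exact sup'_mono_fun fun τ _ => add_le_add_right (hdetour.busy_count_le hlam0 htq τ) _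
  have hcharging : K f - K f' ≤ d := by
    rw [hK, hK, hd]
    exact hdetour.charging_cost_sub_le hlam0 hw Aq hκ
  have hoperation : ∑ p, C p * f' p = ∑ p, C p * f p + lam * (C q - C zero) := by
    simp only [mul_comm (C _)]
    exact hdetour.sum_mul C
  rw [hobj, hobj, hoperation]
  linarith [mul_le_mul_of_nonneg_left hfleet hζ]

/-- Proposition 3, case `t q ≥ t 0` (joint fleet and charging-system bound):
detouring `lam` vehicles from the min-operation path `zero` to a slower path `q`
reduces the total cost `obj f = ζev * N f + K f + Σ C p * f p` by at most
`lam * (C 0 - C q) + d` where `d = κ * lam * Σ_{e ∈ Aq 0 \ Aq q} w e`. -/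
theorem prop3_case_slower
    {Q : Type*} [Fintype Q] [Nonempty Q] (zero : Q)
    (t C : Q → ℝ) (ht : ∀ p, 0 ≤ t p) (hC : ∀ p, 0 ≤ C p) (hCmin : ∀ p, C zero ≤ C p)
    (a : ℝ) (b : ℝ → ℝ) (T : Finset ℝ) (hT : T.Nonempty)
    (ζev : ℝ) (hζ : 0 ≤ ζev)
    (f : Q → ℝ) (hf : ∀ p, 0 ≤ f p)
    (q : Q) (hq : q ≠ zero) (lam : ℝ) (hlam0 : 0 ≤ lam) (hlam : lam ≤ f zero)
    (f' : Q → ℝ) (hf'0 : f' zero = f zero - lam) (hf'q : f' q = f q + lam)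
    (hf'p : ∀ p, p ≠ zero → p ≠ q → f' p = f p)
    (drive : (Q → ℝ) → ℝ → ℝ)
    (hdrive : ∀ g τ, drive g τ =
      b τ + ∑ p, g p * (if τ ∈ Set.Icc a (a + t p) then (1 : ℝ) else 0))
    (N : (Q → ℝ) → ℝ) (hN : ∀ g, N g = T.sup' hT (fun τ => drive g τ))
    {A : Type*} [Fintype A] [DecidableEq A]
    (w : A → ℝ) (hw : ∀ e, 0 ≤ w e) (Aq : Q → Finset A)
    (κ : ℝ) (hκ : 0 ≤ κ)
    (K : (Q → ℝ) → ℝ)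
    (hK : ∀ g, K g = κ * ∑ e, w e * (∑ p, if e ∈ Aq p then g p else 0))
    (obj : (Q → ℝ) → ℝ) (hobj : ∀ g, obj g = ζev * N g + K g + ∑ p, C p * g p)
    (htq : t zero ≤ t q)
    (d : ℝ) (hd : d = κ * lam * ∑ e ∈ Aq zero \ Aq q, w e) :
    obj f - obj f' ≤ lam * (C zero - C q) + d :=
  prop3_case_slower_general zero t C a b T hT ζev hζ f q hq lam hlam0 f' hf'0 hf'q hf'p drive hdrive
    N hN w hw Aq κ hκ K hK obj hobj htq d hd
end

section
/- Proposition 3, case t_q < t_0 (joint fleet and charging-system bound): let the total cost of a routing plan f be obj f = ζev · N f + K f + Σ_{q ∈ Q} C q · f q. If q ≠ 0, 0 ≤ λ ≤ f 0, and t q < t 0, then the cost reduction achieved by detouring λ vehicles from the min-operation path 0 to path q satisfies obj f − obj f' ≤ λ · (C 0 − C q) + ζev · λ + d, where d = κ · λ · Σ_{e ∈ Aq 0 \ Aq q} w e. -/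
/-!
Moving `lam` vehicles from path `src` to path `dst` changes any path-additive quantity
`∑ p, f p * g p` by exactly `lam * (g src - g dst)`. The busy-vehicle count, the charging load
of an arc and the operation cost are all of this form, with `g` a `0/1` indicator in the first
two cases. Hence the busy count rises by at most `lam` at every instant, so the fleet size
(a maximum over instants) drops by at most `lam`; the charging load drops by `lam * w e` only
on arcs used by `src` and not by `dst`; and the operation cost drops by `lam * (C src - C dst)`.
-/

open Finset

theorem Finset.sup'_le_sup'_add {ι α : Type*} [SemilatticeSup α] [Add α] [AddRightMono α]
    {s : Finset ι} (hs : s.Nonempty) {u v : ι → α} {c : α} (h : ∀ i ∈ s, u i ≤ v i + c) :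
    s.sup' hs u ≤ s.sup' hs v + c :=
  sup'_le _ _ fun i hi => (h i hi).trans (add_le_add_left (le_sup' v hi) c)

structure IsDetour_s4 {Q : Type*} (f f' : Q → ℝ) (src dst : Q) (lam : ℝ) : Prop where
  apply_src : f' src = f src - lam
  apply_dst : f' dst = f dst + lam
  apply_of_ne : ∀ p, p ≠ src → p ≠ dst → f' p = f p

namespace IsDetour_s4

variable {Q : Type*} [Fintype Q] {f f' : Q → ℝ} {src dst : Q} {lam : ℝ}

theorem sum_mul_sub_sum_mul (h : IsDetour_s4 f f' src dst lam) (hne : dst ≠ src) (g : Q → ℝ) :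
    ∑ p, f p * g p - ∑ p, f' p * g p = lam * (g src - g dst) := by
  rw [← sum_sub_distrib, Fintype.sum_eq_add src dst hne.symm
    fun p ⟨hs, hd⟩ => by rw [h.apply_of_ne p hs hd, sub_self], h.apply_src, h.apply_dst]
  ring

theorem sum_mul_indicator_le (h : IsDetour_s4 f f' src dst lam) (hne : dst ≠ src) (hlam : 0 ≤ lam)
    (P : Q → Prop) [DecidablePred P] :
    ∑ p, f p * (if P p then 1 else 0) ≤ ∑ p, f' p * (if P p then 1 else 0) + lam := by
  have hdiff := h.sum_mul_sub_sum_mul hne fun p => if P p then 1 else 0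
  have hind : (if P src then (1 : ℝ) else 0) - (if P dst then 1 else 0) ≤ 1 := by
    split_ifs <;> norm_num
  nlinarith

theorem sum_weighted_load_sub_le {A : Type*} [Fintype A] [DecidableEq A]
    (h : IsDetour_s4 f f' src dst lam) (hne : dst ≠ src) (hlam : 0 ≤ lam)
    (w : A → ℝ) (hw : ∀ e, 0 ≤ w e) (Aq : Q → Finset A) :
    ∑ e, w e * (∑ p, if e ∈ Aq p then f p else 0) -
        ∑ e, w e * (∑ p, if e ∈ Aq p then f' p else 0) ≤
      lam * ∑ e ∈ Aq src \ Aq dst, w e := by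
  have load_sub (e : A) : (∑ p, if e ∈ Aq p then f p else 0) -
      (∑ p, if e ∈ Aq p then f' p else 0) =
        lam * ((if e ∈ Aq src then 1 else 0) - (if e ∈ Aq dst then 1 else 0)) := by
    simpa only [mul_ite, mul_one, mul_zero] using
      h.sum_mul_sub_sum_mul hne fun p => if e ∈ Aq p then 1 else 0
  have indicator_sub_le (e : A) :
      (if e ∈ Aq src then (1 : ℝ) else 0) - (if e ∈ Aq dst then 1 else 0) ≤
        if e ∈ Aq src \ Aq dst then 1 else 0 := by
    by_cases hs : e ∈ Aq src <;> by_cases hd : e ∈ Aq dst <;> simp [hs, hd]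
  calc ∑ e, w e * (∑ p, if e ∈ Aq p then f p else 0) -
        ∑ e, w e * (∑ p, if e ∈ Aq p then f' p else 0)
      = ∑ e, w e * (lam * ((if e ∈ Aq src then 1 else 0) - (if e ∈ Aq dst then 1 else 0))) := by
        simp only [← sum_sub_distrib, ← mul_sub, load_sub]
    _ ≤ ∑ e, w e * (lam * if e ∈ Aq src \ Aq dst then 1 else 0) :=
        sum_le_sum fun e _ =>
          mul_le_mul_of_nonneg_left (mul_le_mul_of_nonneg_left (indicator_sub_le e) hlam) (hw e)
    _ = lam * ∑ e ∈ Aq src \ Aq dst, w e := by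
        simp only [mul_ite, mul_one, mul_zero, ← sum_filter, filter_mem_eq_inter, univ_inter, mul_sum, mul_comm]
end IsDetour_s4

theorem prop3_case_faster_general
    {Q : Type*} [Fintype Q] (zero : Q)
    (t C : Q → ℝ)
    (a : ℝ) (b : ℝ → ℝ) (T : Finset ℝ) (hT : T.Nonempty)
    (ζev : ℝ) (hζ : 0 ≤ ζev)
    (f : Q → ℝ)
    (q : Q) (hq : q ≠ zero) (lam : ℝ) (hlam0 : 0 ≤ lam)
    (f' : Q → ℝ) (hf'0 : f' zero = f zero - lam) (hf'q : f' q = f q + lam)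
    (hf'p : ∀ p, p ≠ zero → p ≠ q → f' p = f p)
    (drive : (Q → ℝ) → ℝ → ℝ)
    (hdrive : ∀ g τ, drive g τ =
      b τ + ∑ p, g p * (if τ ∈ Set.Icc a (a + t p) then (1 : ℝ) else 0))
    (N : (Q → ℝ) → ℝ) (hN : ∀ g, N g = T.sup' hT (fun τ => drive g τ))
    {A : Type*} [Fintype A] [DecidableEq A]
    (w : A → ℝ) (hw : ∀ e, 0 ≤ w e) (Aq : Q → Finset A)
    (κ : ℝ) (hκ : 0 ≤ κ)
    (K : (Q → ℝ) → ℝ)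
    (hK : ∀ g, K g = κ * ∑ e, w e * (∑ p, if e ∈ Aq p then g p else 0))
    (obj : (Q → ℝ) → ℝ) (hobj : ∀ g, obj g = ζev * N g + K g + ∑ p, C p * g p)
    (d : ℝ) (hd : d = κ * lam * ∑ e ∈ Aq zero \ Aq q, w e) :
    obj f - obj f' ≤ lam * (C zero - C q) + ζev * lam + d := by
  have hdet : IsDetour_s4 f f' zero q lam := ⟨hf'0, hf'q, hf'p⟩
  have hfleet : N f ≤ N f' + lam := by
    rw [hN, hN]
    refine T.sup'_le_sup'_add hT fun τ _ => ?_
    rw [hdrive, hdrive, add_assoc]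
    exact add_le_add_right (hdet.sum_mul_indicator_le hq hlam0 _) (b τ)
  have hcharge : K f - K f' ≤ d := by
    rw [hK, hK, hd, ← mul_sub, mul_assoc]
    exact mul_le_mul_of_nonneg_left (hdet.sum_weighted_load_sub_le hq hlam0 w hw Aq) hκ
  have hop : ∑ p, C p * f p - ∑ p, C p * f' p = lam * (C zero - C q) := by
    simpa only [mul_comm (C _)] using hdet.sum_mul_sub_sum_mul hq C
  have hfleet_cost : ζev * N f ≤ ζev * N f' + ζev * lam := by
    rw [← mul_add]
    exact mul_le_mul_of_nonneg_left hfleet hζ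
  rw [hobj, hobj]
  linarith

/-- Proposition 3, case `t q < t 0` (joint fleet and charging-system bound):
detouring `lam` vehicles from the min-operation path `zero` to a faster path `q`
reduces the total cost `obj f = ζev * N f + K f + Σ C p * f p` by at most
`lam * (C 0 - C q) + ζev * lam + d` where `d = κ * lam * Σ_{e ∈ Aq 0 \ Aq q} w e`. -/
theorem prop3_case_faster
    {Q : Type*} [Fintype Q] [Nonempty Q] (zero : Q)
    (t C : Q → ℝ) (ht : ∀ p, 0 ≤ t p) (hC : ∀ p, 0 ≤ C p) (hCmin : ∀ p, C zero ≤ C p)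
    (a : ℝ) (b : ℝ → ℝ) (T : Finset ℝ) (hT : T.Nonempty)
    (ζev : ℝ) (hζ : 0 ≤ ζev)
    (f : Q → ℝ) (hf : ∀ p, 0 ≤ f p)
    (q : Q) (hq : q ≠ zero) (lam : ℝ) (hlam0 : 0 ≤ lam) (hlam : lam ≤ f zero)
    (f' : Q → ℝ) (hf'0 : f' zero = f zero - lam) (hf'q : f' q = f q + lam)
    (hf'p : ∀ p, p ≠ zero → p ≠ q → f' p = f p)
    (drive : (Q → ℝ) → ℝ → ℝ)
    (hdrive : ∀ g τ, drive g τ =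
      b τ + ∑ p, g p * (if τ ∈ Set.Icc a (a + t p) then (1 : ℝ) else 0))
    (N : (Q → ℝ) → ℝ) (hN : ∀ g, N g = T.sup' hT (fun τ => drive g τ))
    {A : Type*} [Fintype A] [DecidableEq A]
    (w : A → ℝ) (hw : ∀ e, 0 ≤ w e) (Aq : Q → Finset A)
    (κ : ℝ) (hκ : 0 ≤ κ)
    (K : (Q → ℝ) → ℝ)
    (hK : ∀ g, K g = κ * ∑ e, w e * (∑ p, if e ∈ Aq p then g p else 0))
    (obj : (Q → ℝ) → ℝ) (hobj : ∀ g, obj g = ζev * N g + K g + ∑ p, C p * g p)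
    (htq : t q < t zero)
    (d : ℝ) (hd : d = κ * lam * ∑ e ∈ Aq zero \ Aq q, w e) :
    obj f - obj f' ≤ lam * (C zero - C q) + ζev * lam + d :=
  prop3_case_faster_general zero t C a b T hT ζev hζ f q hq lam hlam0 f' hf'0 hf'q hf'p drive hdrive
    N hN w hw Aq κ hκ K hK obj hobj d hd
end

section
/- Fleet-size monotonicity under detouring to a slower path (step of the proof of Proposition 1, case 1): if q ≠ 0, 0 ≤ λ ≤ f 0, and t q ≥ t 0, then for every time τ one has drive f' τ ≥ drive f τ, and consequently the required fleet size does not decrease: N f' ≥ N f. -/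
/-! Moving `λ` vehicles from path `0` to path `q` changes the busy count at time `τ` by
`λ · (1_{[a, a + t q]}(τ) - 1_{[a, a + t 0]}(τ))`, which is nonnegative because the slower path's
busy interval contains the faster one's. -/

open Set

theorem Fintype.sum_mul_eq_add_of_transfer {ι R : Type*} [Fintype ι] [CommRing R]
    {i₀ i₁ : ι} (h : i₁ ≠ i₀) {f f' w : ι → R} {c : R}
    (h₀ : f' i₀ = f i₀ - c) (h₁ : f' i₁ = f i₁ + c) (hrest : ∀ p, p ≠ i₀ → p ≠ i₁ → f' p = f p) :
    ∑ p, f' p * w p = ∑ p, f p * w p + c * (w i₁ - w i₀) := by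
  have hdiff : ∑ p, (f' p - f p) * w p = (f' i₁ - f i₁) * w i₁ + (f' i₀ - f i₀) * w i₀ :=
    Fintype.sum_eq_add i₁ i₀ h fun p hp => by rw [hrest p hp.2 hp.1, sub_self, zero_mul]
  simp only [sub_mul, Finset.sum_sub_distrib, h₀, h₁] at hdiff
  linear_combination hdiff

theorem ite_mem_Icc_le_ite_mem_Icc {α : Type*} [LinearOrder α] {a b b' τ : α} (h : b ≤ b') :
    (if τ ∈ Icc a b then (1 : ℝ) else 0) ≤ if τ ∈ Icc a b' then 1 else 0 := by
  have hsub : Icc a b ⊆ Icc a b' := Icc_subset_Icc_right h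
  split_ifs with hs hs' <;> first | exact le_rfl | exact zero_le_one | exact absurd (hsub hs) hs'

theorem fleet_monotone_slower_detour_general
    {Q : Type*} [Fintype Q] (zero : Q)
    (t : Q → ℝ)
    (a : ℝ) (b : ℝ → ℝ) (T : Finset ℝ) (hT : T.Nonempty)
    (f : Q → ℝ)
    (q : Q) (hq : q ≠ zero) (lam : ℝ) (hlam0 : 0 ≤ lam)
    (f' : Q → ℝ) (hf'0 : f' zero = f zero - lam) (hf'q : f' q = f q + lam)
    (hf'p : ∀ p, p ≠ zero → p ≠ q → f' p = f p)
    (drive : (Q → ℝ) → ℝ → ℝ)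
    (hdrive : ∀ g τ, drive g τ =
      b τ + ∑ p, g p * (if τ ∈ Set.Icc a (a + t p) then (1 : ℝ) else 0))
    (N : (Q → ℝ) → ℝ) (hN : ∀ g, N g = T.sup' hT (fun τ => drive g τ))
    (htq : t zero ≤ t q) :
    (∀ τ : ℝ, drive f τ ≤ drive f' τ) ∧ N f ≤ N f' := by
  have hdrive_le (τ : ℝ) : drive f τ ≤ drive f' τ := by
    rw [hdrive, hdrive, Fintype.sum_mul_eq_add_of_transfer hq hf'0 hf'q hf'p]
    gcongr
    exact le_add_of_nonneg_right <| mul_nonneg hlam0 <| sub_nonneg.2 <|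
      ite_mem_Icc_le_ite_mem_Icc (add_le_add_right htq a)
  refine ⟨hdrive_le, ?_⟩
  rw [hN, hN]
  exact Finset.sup'_mono_fun fun τ _ => hdrive_le τ

/-- Fleet-size monotonicity under detouring to a slower path (Proposition 1, case 1 step):
if `t q ≥ t 0`, then at every time `τ` the busy-vehicle count of the detoured plan `f'`
is at least that of `f`, and consequently `N f' ≥ N f`. -/
theorem fleet_monotone_slower_detour
    {Q : Type*} [Fintype Q] [Nonempty Q] (zero : Q)
    (t : Q → ℝ) (ht : ∀ p, 0 ≤ t p)
    (a : ℝ) (b : ℝ → ℝ) (T : Finset ℝ) (hT : T.Nonempty)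
    (f : Q → ℝ) (hf : ∀ p, 0 ≤ f p)
    (q : Q) (hq : q ≠ zero) (lam : ℝ) (hlam0 : 0 ≤ lam) (hlam : lam ≤ f zero)
    (f' : Q → ℝ) (hf'0 : f' zero = f zero - lam) (hf'q : f' q = f q + lam)
    (hf'p : ∀ p, p ≠ zero → p ≠ q → f' p = f p)
    (drive : (Q → ℝ) → ℝ → ℝ)
    (hdrive : ∀ g τ, drive g τ =
      b τ + ∑ p, g p * (if τ ∈ Set.Icc a (a + t p) then (1 : ℝ) else 0))
    (N : (Q → ℝ) → ℝ) (hN : ∀ g, N g = T.sup' hT (fun τ => drive g τ))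
    (htq : t zero ≤ t q) :
    (∀ τ : ℝ, drive f τ ≤ drive f' τ) ∧ N f ≤ N f' :=
  fleet_monotone_slower_detour_general zero t a b T hT f q hq lam hlam0 f' hf'0 hf'q hf'p drive
    hdrive N hN htq
end
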